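/- Let i ∈ [k+4] and j ∈ I_i. Then E_j^i is the disjoint union of the sets F_{j,t}^i over t ∈ I_j^i together with F_j^i: every σ ∈ E_j^i lies in exactly one of these sets. -/

import Mathlib

/-!
Call `r` *private* to the arm `{j, r} ∈ σ` if no other member of `σ` covers `r`. For
`σ ∈ E_j^i` and `t ∈ I_j^i`, removing `{j, t}` uncovers at most `t` (the vertex `j` stays
covered by `{j, j+1}`), so `C_{σ \ {j,t}}` is `{i, i+1, t}` or `{i, i+1}` according as `t`
is private or not. Hence `F_j^i` says that every `t ∈ I_j^i` is private, and `F_{j,t}^i`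
says that `t` is the least non-private element of `I_j^i`; the decomposition is then the
usual "first failure" case split.
-/

open Finset

/-- Potential vertices of `KG_{2,k}`: finite subsets of `[k+4]` (modelled as `ZMod (k+4)`);
actual vertices are those of cardinality 2. -/
abbrev Vtx (k : ℕ) := Finset (ZMod (k + 4))

/-- `S_σ`, the union of the pairs in `σ`. -/
def Sσ {k : ℕ} (σ : Finset (Vtx k)) : Finset (ZMod (k + 4)) := σ.sup id

/-- `C_σ = [k+4] \ S_σ`. -/
def Cσ {k : ℕ} (σ : Finset (Vtx k)) : Finset (ZMod (k + 4)) := Finset.univ \ σ.sup id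

/-- Adjacency in the Kneser graph `KG_{2,k}`: two 2-subsets that are disjoint. -/
def kgAdj {k : ℕ} (u v : Vtx k) : Prop := u.card = 2 ∧ v.card = 2 ∧ Disjoint u v

/-- A stable vertex: a 2-subset containing no two cyclically consecutive elements. -/
def IsStable {k : ℕ} (u : Vtx k) : Prop := u.card = 2 ∧ ∀ a ∈ u, a + 1 ∉ u

/-- Adjacency in `S_{2,k}`: a Kneser edge at least one of whose endpoints is stable. -/
def sAdj {k : ℕ} (u v : Vtx k) : Prop := kgAdj u v ∧ (IsStable u ∨ IsStable v)

/-- `σ` is a face of the neighborhood complex `N(KG_{2,k})`: the members of `σ`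
have a common neighbor in `KG_{2,k}`. -/
def kgFace {k : ℕ} (σ : Finset (Vtx k)) : Prop :=
  ∃ v : Vtx k, v.card = 2 ∧ ∀ u ∈ σ, kgAdj v u

/-- `σ` is a face of the neighborhood complex `N(S_{2,k})`. -/
def sFace {k : ℕ} (σ : Finset (Vtx k)) : Prop :=
  ∃ v : Vtx k, v.card = 2 ∧ ∀ u ∈ σ, sAdj v u

/-- `X_{i,i+1}` (explicit description): sets `σ` of vertices each disjoint from
`{i,i+1}`, with `C_σ = {i,i+1}`, containing `{j,j+1}` for some `j ≠ i`. -/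
def XsetC {k : ℕ} (i : ZMod (k + 4)) (σ : Finset (Vtx k)) : Prop :=
  (∀ u ∈ σ, u.card = 2 ∧ Disjoint u ({i, i + 1} : Vtx k)) ∧
  Cσ σ = {i, i + 1} ∧
  ∃ j : ZMod (k + 4), j ≠ i ∧ ({j, j + 1} : Vtx k) ∈ σ

/-- `I_i = [k+4] \ {i-1, i, i+1}`. -/
def Ii {k : ℕ} (i : ZMod (k + 4)) : Finset (ZMod (k + 4)) :=
  Finset.univ \ {i - 1, i, i + 1}

/-- `E_j^i ⊆ X_{i,i+1}`: those `σ` for which `j` is the least index in `I_i`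
(with respect to the order of `[k+4]`, via `ZMod.val`) with `{j,j+1} ∈ σ`. -/
def Eji {k : ℕ} (i j : ZMod (k + 4)) (σ : Finset (Vtx k)) : Prop :=
  XsetC i σ ∧ ({j, j + 1} : Vtx k) ∈ σ ∧
    ∀ s ∈ Ii i, s.val < j.val → ({s, s + 1} : Vtx k) ∉ σ

/-- `I_j^i = [k+4] \ {i, i+1, j-1, j, j+1}`. -/
def Iji {k : ℕ} (i j : ZMod (k + 4)) : Finset (ZMod (k + 4)) :=
  Finset.univ \ {i, i + 1, j - 1, j, j + 1}

/-- `𝓘_t = {r ∈ I_j^i : r < t}` (order of `[k+4]`, via `ZMod.val`). -/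
def It {k : ℕ} (i j t : ZMod (k + 4)) : Finset (ZMod (k + 4)) :=
  (Iji i j).filter fun r => r.val < t.val

/-- `F_{j,t}^i`: those `σ ∈ E_j^i` such that for all `r ∈ 𝓘_t`, `{j,r} ∈ σ` and
`r ∈ C_{σ \ {j,r}}`, and either `{j,t} ∉ σ` or `C_{σ \ {j,t}} = {i,i+1}`. -/
def Fjt {k : ℕ} (i j t : ZMod (k + 4)) (σ : Finset (Vtx k)) : Prop :=
  Eji i j σ ∧
  (∀ r ∈ It i j t, ({j, r} : Vtx k) ∈ σ ∧ r ∈ Cσ (σ.erase {j, r})) ∧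
  (({j, t} : Vtx k) ∉ σ ∨ Cσ (σ.erase {j, t}) = {i, i + 1})

/-- `F_j^i`: those `σ ∈ E_j^i` with `{j,s} ∈ σ` and `C_{σ \ {j,s}} = {i,i+1,s}`
for every `s ∈ I_j^i`. -/
def Fj {k : ℕ} (i j : ZMod (k + 4)) (σ : Finset (Vtx k)) : Prop :=
  Eji i j σ ∧
  ∀ s ∈ Iji i j, ({j, s} : Vtx k) ∈ σ ∧ Cσ (σ.erase {j, s}) = {i, i + 1, s}


section FirstFailure

variable {α β : Type*} [LinearOrder β]

theorem Finset.exists_first_not_or_forall (s : Finset α) (f : α → β) (p : α → Prop) :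
    (∃ t ∈ s, (∀ r ∈ s, f r < f t → p r) ∧ ¬ p t) ∨ ∀ r ∈ s, p r := by
  classical
  rcases (s.filter (¬ p ·)).eq_empty_or_nonempty with hempty | hne
  · exact Or.inr fun r hr => by simpa using Finset.filter_eq_empty_iff.mp hempty hr
  obtain ⟨t, ht, htmin⟩ := (s.filter (¬ p ·)).exists_min_image f hne
  obtain ⟨hts, hpt⟩ := Finset.mem_filter.mp ht
  refine Or.inl ⟨t, hts, fun r hr hlt => ?_, hpt⟩
  by_contra hpr
  exact (htmin r (Finset.mem_filter.mpr ⟨hr, hpr⟩)).not_gt hlt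

theorem Finset.eq_of_first_not {s : Finset α} {f : α → β} {p : α → Prop}
    (hf : Set.InjOn f s) {t t' : α} (ht : t ∈ s) (ht' : t' ∈ s)
    (hmin : ∀ r ∈ s, f r < f t → p r) (hpt : ¬ p t)
    (hmin' : ∀ r ∈ s, f r < f t' → p r) (hpt' : ¬ p t') : t = t' := by
  rcases lt_trichotomy (f t) (f t') with h | h | h
  · exact absurd (hmin' t ht h) hpt
  · exact hf ht ht' h
  · exact absurd (hmin t' ht' h) hpt'

end FirstFailure

variable {k : ℕ}

theorem mem_Cσ {σ : Finset (Vtx k)} {x : ZMod (k + 4)} :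
    x ∈ Cσ σ ↔ ∀ u ∈ σ, x ∉ u := by
  simp [Cσ, Finset.mem_sup]

theorem Cσ_erase (σ : Finset (Vtx k)) (u : Vtx k) :
    Cσ (σ.erase u) = Cσ σ ∪ (u ∩ Cσ (σ.erase u)) := by
  ext x
  simp only [Finset.mem_union, Finset.mem_inter, mem_Cσ, Finset.mem_erase]
  constructor
  · intro h
    by_cases hxu : x ∈ u
    · exact Or.inr ⟨hxu, h⟩
    · exact Or.inl fun v hv hxv => h v ⟨fun hvu => hxu (hvu ▸ hxv), hv⟩ hxv
  · rintro (h | ⟨-, h⟩)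
    · exact fun v hv => h v hv.2
    · exact h

def IsPrivate (σ : Finset (Vtx k)) (j r : ZMod (k + 4)) : Prop :=
  ({j, r} : Vtx k) ∈ σ ∧ r ∈ Cσ (σ.erase {j, r})

section Arm

variable {σ : Finset (Vtx k)} {i j t : ZMod (k + 4)}

theorem Cσ_erase_arm (hC : Cσ σ = {i, i + 1}) (hjj : ({j, j + 1} : Vtx k) ∈ σ)
    (htj : t ≠ j + 1) :
    Cσ (σ.erase {j, t}) = {i, i + 1} ∪ ({t} ∩ Cσ (σ.erase {j, t})) := by
  have : Fact (1 < k + 4) := ⟨by omega⟩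
  have hne : ({j, j + 1} : Vtx k) ≠ {j, t} := fun h => by
    have : j + 1 ∈ ({j, t} : Vtx k) := h ▸ by simp
    simp only [Finset.mem_insert, Finset.mem_singleton, add_eq_left] at this
    exact this.elim one_ne_zero htj.symm
  have hj : j ∉ Cσ (σ.erase {j, t}) := fun h =>
    mem_Cσ.mp h _ (Finset.mem_erase.mpr ⟨hne, hjj⟩) (by simp)
  conv_lhs => rw [Cσ_erase, hC]
  congr 1
  ext x
  by_cases hx : x = j <;> simp_all

theorem isPrivate_iff (hC : Cσ σ = {i, i + 1}) (hjj : ({j, j + 1} : Vtx k) ∈ σ)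
    (htj : t ≠ j + 1) :
    IsPrivate σ j t ↔ ({j, t} : Vtx k) ∈ σ ∧ Cσ (σ.erase {j, t}) = {i, i + 1, t} := by
  refine and_congr_right fun _ => ⟨fun ht => ?_, fun h => h ▸ by simp⟩
  rw [Cσ_erase_arm hC hjj htj, Finset.singleton_inter_of_mem ht]
  ext x
  simp

theorem not_isPrivate_iff (hC : Cσ σ = {i, i + 1}) (hjj : ({j, j + 1} : Vtx k) ∈ σ)
    (hti : t ≠ i) (hti1 : t ≠ i + 1) (htj : t ≠ j + 1) :
    ¬ IsPrivate σ j t ↔ ({j, t} : Vtx k) ∉ σ ∨ Cσ (σ.erase {j, t}) = {i, i + 1} := by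
  rw [IsPrivate, not_and_or]
  refine or_congr_right ⟨fun ht => ?_, fun h => h ▸ by simp [hti, hti1]⟩
  rw [Cσ_erase_arm hC hjj htj, Finset.singleton_inter_of_notMem ht, Finset.union_empty]

theorem ne_of_mem_Iji (ht : t ∈ Iji i j) : t ≠ i ∧ t ≠ i + 1 ∧ t ≠ j + 1 := by
  simp only [Iji, Finset.mem_sdiff, Finset.mem_univ, Finset.mem_insert, Finset.mem_singleton,
    true_and] at ht
  tauto

theorem Fj_iff : Fj i j σ ↔ Eji i j σ ∧ ∀ s ∈ Iji i j, IsPrivate σ j s :=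
  and_congr_right fun hE => forall₂_congr fun _ hs =>
    (isPrivate_iff hE.1.2.1 hE.2.1 (ne_of_mem_Iji hs).2.2).symm

theorem Fjt_iff (ht : t ∈ Iji i j) :
    Fjt i j t σ ↔ Eji i j σ ∧
      (∀ r ∈ Iji i j, r.val < t.val → IsPrivate σ j r) ∧ ¬ IsPrivate σ j t := by
  obtain ⟨hti, hti1, htj⟩ := ne_of_mem_Iji ht
  refine and_congr_right fun hE =>
    and_congr ?_ (not_isPrivate_iff hE.1.2.1 hE.2.1 hti hti1 htj).symm
  simp only [It, Finset.mem_filter, and_imp, IsPrivate]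

end Arm

theorem E_eq_disjoint_union_F_general {k : ℕ} (i j : ZMod (k + 4))
    (σ : Finset (Vtx k)) :
    (Eji i j σ ↔ (∃ t ∈ Iji i j, Fjt i j t σ) ∨ Fj i j σ) ∧
    (∀ t ∈ Iji i j, ∀ t' ∈ Iji i j, Fjt i j t σ → Fjt i j t' σ → t = t') ∧
    ¬ ((∃ t ∈ Iji i j, Fjt i j t σ) ∧ Fj i j σ) := by
  refine ⟨⟨fun hE => ?_, ?_⟩, ?_, ?_⟩
  · rcases (Iji i j).exists_first_not_or_forall ZMod.val (IsPrivate σ j) with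
      ⟨t, ht, hmin, hpt⟩ | hall
    · exact Or.inl ⟨t, ht, (Fjt_iff ht).mpr ⟨hE, hmin, hpt⟩⟩
    · exact Or.inr (Fj_iff.mpr ⟨hE, hall⟩)
  · rintro (⟨t, -, hF⟩ | hF) <;> exact hF.1
  · intro t ht t' ht' hF hF'
    obtain ⟨-, hmin, hpt⟩ := (Fjt_iff ht).mp hF
    obtain ⟨-, hmin', hpt'⟩ := (Fjt_iff ht').mp hF'
    exact Finset.eq_of_first_not (ZMod.val_injective _).injOn ht ht' hmin hpt hmin' hpt'
  · rintro ⟨⟨t, ht, hF⟩, hFj⟩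
    exact ((Fjt_iff ht).mp hF).2.2 ((Fj_iff.mp hFj).2 t ht)

/-- For `i ∈ [k+4]` and `j ∈ I_i`, `E_j^i` is the disjoint union
of the `F_{j,t}^i`, `t ∈ I_j^i`, together with `F_j^i`: every `σ ∈ E_j^i` lies
in exactly one of these sets. -/
theorem E_eq_disjoint_union_F {k : ℕ} (i j : ZMod (k + 4)) (hj : j ∈ Ii i)
    (σ : Finset (Vtx k)) :
    (Eji i j σ ↔ (∃ t ∈ Iji i j, Fjt i j t σ) ∨ Fj i j σ) ∧
    (∀ t ∈ Iji i j, ∀ t' ∈ Iji i j, Fjt i j t σ → Fjt i j t' σ → t = t') ∧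
    ¬ ((∃ t ∈ Iji i j, Fjt i j t σ) ∧ Fj i j σ) :=
  E_eq_disjoint_union_F_general i j σ
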